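/- Let u be a smooth strictly convex function on an open set in ℝⁿ satisfying the equation Σ_{i,j} ∂_i∂_j(u^{ij}) = −A. Then L = log det(Hess u) satisfies Σ_{i,j} ∂_j(u^{ij} ∂_i L) = A, and equivalently Σ_{i,j} u^{ij}(L_{ij} − L_i L_j) = A. -/

import Mathlib

open Matrix BigOperators

/-- Partial derivative in the `i`-th coordinate direction. -/
noncomputable def pd {n : ℕ} (i : Fin n) (f : (Fin n → ℝ) → ℝ) : (Fin n → ℝ) → ℝ :=
  fun x => fderiv ℝ f x (Pi.single i 1)

/-- Hessian matrix of second partial derivatives. -/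
noncomputable def hess {n : ℕ} (u : (Fin n → ℝ) → ℝ) (x : Fin n → ℝ) :
    Matrix (Fin n) (Fin n) ℝ :=
  Matrix.of fun i j => pd i (pd j u) x

section aux
variable {n : ℕ}

lemma pd_congr_nhds {f g : (Fin n → ℝ) → ℝ} {x} (i : Fin n) (h : f =ᶠ[nhds x] g) :
    pd i f x = pd i g x := by unfold pd; rw [h.fderiv_eq]

lemma pd_congr_open {f g : (Fin n → ℝ) → ℝ} {Ω} (hΩ : IsOpen Ω) (h : ∀ y ∈ Ω, f y = g y)
    {x} (hx : x ∈ Ω) (i : Fin n) : pd i f x = pd i g x :=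
  pd_congr_nhds i (Filter.eventuallyEq_of_mem (hΩ.mem_nhds hx) h)

lemma pd_const (i : Fin n) (c : ℝ) (x) : pd i (fun _ => c) x = 0 := by simp [pd]

lemma pd_neg {f : (Fin n → ℝ) → ℝ} (i : Fin n) (x) :
    pd i (fun y => -f y) x = -pd i f x := by simp [pd]

lemma pd_sum {ι : Type*} {s : Finset ι} {f : ι → (Fin n → ℝ) → ℝ} {x} (i : Fin n)
    (h : ∀ a ∈ s, DifferentiableAt ℝ (f a) x) :
    pd i (fun y => ∑ a ∈ s, f a y) x = ∑ a ∈ s, pd i (f a) x := by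
  unfold pd; rw [fderiv_fun_sum h]; simp

lemma pd_mul {f g : (Fin n → ℝ) → ℝ} {x} (i : Fin n)
    (hf : DifferentiableAt ℝ f x) (hg : DifferentiableAt ℝ g x) :
    pd i (fun y => f y * g y) x = pd i f x * g x + f x * pd i g x := by
  unfold pd; rw [fderiv_fun_mul hf hg]
  simp only [ContinuousLinearMap.add_apply, ContinuousLinearMap.smul_apply, smul_eq_mul]
  ring

lemma contDiffOn_pd {f : (Fin n → ℝ) → ℝ} {Ω} (hΩ : IsOpen Ω)
    (hf : ContDiffOn ℝ (⊤:ℕ∞) f Ω) (i : Fin n) :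
    ContDiffOn ℝ (⊤:ℕ∞) (pd i f) Ω :=
  (hf.fderiv_of_isOpen hΩ (le_of_eq rfl)).clm_apply contDiffOn_const

lemma diffAt_of_cdOn {f : (Fin n → ℝ) → ℝ} {Ω} (hΩ : IsOpen Ω)
    (hf : ContDiffOn ℝ (⊤:ℕ∞) f Ω) {x} (hx : x ∈ Ω) : DifferentiableAt ℝ f x :=
  (hf.contDiffAt (hΩ.mem_nhds hx)).differentiableAt (by simp)

lemma pd_comm {f : (Fin n → ℝ) → ℝ} {x} (hf : ContDiffAt ℝ (⊤:ℕ∞) f x) (i j : Fin n) :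
    pd i (pd j f) x = pd j (pd i f) x := by
  have hd : DifferentiableAt ℝ (fderiv ℝ f) x :=
    (hf.fderiv_right (m := (⊤:ℕ∞)) (le_of_eq rfl)).differentiableAt (by simp)
  have key : ∀ a b : Fin n, pd a (pd b f) x
      = fderiv ℝ (fderiv ℝ f) x (Pi.single a 1) (Pi.single b 1) := by
    intro a b
    show fderiv ℝ (fun y => fderiv ℝ f y (Pi.single b 1)) x (Pi.single a 1) = _
    rw [fderiv_clm_apply hd (differentiableAt_const _)]
    simp
  rw [key i j, key j i]
  exact (hf.isSymmSndFDerivAt (by rw [show ((2:WithTop ℕ∞)) = ((2:ℕ∞) : WithTop ℕ∞) from rfl, minSmoothness_of_isRCLikeNormedField]; exact WithTop.coe_le_coe.2 le_top)).eq _ _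

lemma pd_log_comp {g : (Fin n → ℝ) → ℝ} {x} (k : Fin n)
    (hg : DifferentiableAt ℝ g x) (h0 : g x ≠ 0) :
    pd k (fun y => Real.log (g y)) x = (g x)⁻¹ * pd k g x := by
  have h := (Real.hasDerivAt_log h0).comp_hasFDerivAt x hg.hasFDerivAt
  show fderiv ℝ (fun y => Real.log (g y)) x (Pi.single k 1) = _
  rw [show (fun y => Real.log (g y)) = Real.log ∘ g from rfl, h.fderiv]
  simp [pd]

end aux

section det
variable {n : ℕ}

/-- The determinant as a continuous multilinear map in the rows. -/
noncomputable def detCMM (n : ℕ) : ContinuousMultilinearMap ℝ (fun _ : Fin n => (Fin n → ℝ)) ℝ :=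
  MultilinearMap.mkContinuous
    ((Matrix.detRowAlternating : AlternatingMap ℝ (Fin n → ℝ) ℝ (Fin n)).toMultilinearMap)
    (Fintype.card (Equiv.Perm (Fin n))) (by
      intro m
      have hb : ∀ σ : Equiv.Perm (Fin n),
          ‖Equiv.Perm.sign σ • ∏ i, m (σ i) i‖ ≤ ∏ i, ‖m i‖ := by
        intro σ
        have h1 : ‖Equiv.Perm.sign σ • ∏ i, m (σ i) i‖ = ‖∏ i, m (σ i) i‖ := by
          rcases Int.units_eq_one_or (Equiv.Perm.sign σ) with h | h <;> simp [h]
        rw [h1]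
        calc ‖∏ i, m (σ i) i‖ = ∏ i, ‖m (σ i) i‖ := by
              rw [Real.norm_eq_abs, Finset.abs_prod]; simp [Real.norm_eq_abs]
          _ ≤ ∏ i, ‖m (σ i)‖ := by
              apply Finset.prod_le_prod (fun _ _ => norm_nonneg _)
              intro i _; exact norm_le_pi_norm (m (σ i)) i
          _ = ∏ i, ‖m i‖ := Equiv.prod_comp σ fun i => ‖m i‖
      show ‖(Matrix.of m).det‖ ≤ _
      rw [Matrix.det_apply]
      calc ‖∑ σ : Equiv.Perm (Fin n), Equiv.Perm.sign σ • ∏ i, Matrix.of m (σ i) i‖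
          ≤ ∑ σ : Equiv.Perm (Fin n), ‖Equiv.Perm.sign σ • ∏ i, m (σ i) i‖ :=
            norm_sum_le _ _
        _ ≤ ∑ _σ : Equiv.Perm (Fin n), ∏ i, ‖m i‖ :=
            Finset.sum_le_sum fun σ _ => hb σ
        _ = (Fintype.card (Equiv.Perm (Fin n))) * ∏ i, ‖m i‖ := by
            rw [Finset.sum_const, nsmul_eq_mul, Finset.card_univ])

lemma detCMM_apply (m : Fin n → Fin n → ℝ) : detCMM n m = (Matrix.of m).det := rfl

lemma det_updateRow_eq_sum (A : Matrix (Fin n) (Fin n) ℝ) (j : Fin n) (v : Fin n → ℝ) :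
    (A.updateRow j v).det = ∑ i, A.adjugate i j * v i := by
  have h1 : (A.updateRow j v).det = Matrix.cramer Aᵀ v j := by
    rw [Matrix.cramer_apply, Matrix.updateCol_transpose, Matrix.det_transpose]
  rw [h1, Matrix.cramer_eq_adjugate_mulVec, ← Matrix.adjugate_transpose]
  simp [Matrix.mulVec, dotProduct, Matrix.transpose_apply]

lemma pd_det {M : (Fin n → ℝ) → Fin n → Fin n → ℝ} {x : Fin n → ℝ}
    (hM : ∀ i j, DifferentiableAt ℝ (fun y => M y i j) x) (k : Fin n) :
    pd k (fun y => (Matrix.of (M y)).det) x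
      = ∑ j, ∑ i, (Matrix.of (M x)).adjugate i j * pd k (fun y => M y j i) x := by
  classical
  set g' : Fin n → (Fin n → ℝ) →L[ℝ] (Fin n → ℝ) :=
    fun j => ContinuousLinearMap.pi (fun i => fderiv ℝ (fun y => M y j i) x) with hg'
  have hg : ∀ j, HasFDerivAt (fun y => M y j) (g' j) x := fun j =>
    hasFDerivAt_pi.2 fun i => (hM j i).hasFDerivAt
  have H := HasFDerivAt.multilinear_comp (f := detCMM n) hg
  have hpd : pd k (fun y => (Matrix.of (M y)).det) x
      = ∑ j, detCMM n (Function.update (fun a => M x a) j (g' j (Pi.single k 1))) := by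
    show fderiv ℝ (fun y => detCMM n (fun a => M y a)) x (Pi.single k 1) = _
    rw [H.fderiv]
    simp [ContinuousLinearMap.sum_apply]
  rw [hpd]
  refine Finset.sum_congr rfl fun j _ => ?_
  have hupd : (Matrix.of (Function.update (fun a => M x a) j (g' j (Pi.single k 1))))
      = (Matrix.of (M x)).updateRow j (g' j (Pi.single k 1)) := rfl
  rw [detCMM_apply, hupd, det_updateRow_eq_sum]
  rfl

end det


/-- equivalent forms of Abreu's equation:
Σ ∂_j(u^{ij}L_i) = A and Σ u^{ij}(L_{ij} - L_iL_j) = A. -/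
theorem stmt_16 {n : ℕ} (Ω : Set (Fin n → ℝ)) (hΩ : IsOpen Ω)
    (u A : (Fin n → ℝ) → ℝ) (hu : ContDiffOn ℝ (⊤ : ℕ∞) u Ω)
    (hA : ContDiffOn ℝ (⊤ : ℕ∞) A Ω)
    (hpos : ∀ x ∈ Ω, (hess u x).PosDef)
    (habreu : ∀ x ∈ Ω,
      ∑ i, ∑ j, pd i (pd j (fun y => (hess u y)⁻¹ i j)) x = -A x) :
    ∀ x ∈ Ω,
      (∑ i, ∑ j, pd j (fun y =>
          (hess u y)⁻¹ i j * pd i (fun z => Real.log (hess u z).det) y) x = A x) ∧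
      (∑ i, ∑ j, (hess u x)⁻¹ i j *
          (pd i (pd j (fun z => Real.log (hess u z).det)) x
            - pd i (fun z => Real.log (hess u z).det) x
              * pd j (fun z => Real.log (hess u z).det) x) = A x) := by
  classical
  have hu' : ContDiffOn ℝ (⊤:ℕ∞) u Ω := hu.of_le (by simp)
  have hH : ∀ i j : Fin n, ContDiffOn ℝ (⊤:ℕ∞) (fun y => hess u y i j) Ω :=
    fun i j => contDiffOn_pd hΩ (contDiffOn_pd hΩ hu' j) i
  have hdetpos : ∀ y ∈ Ω, 0 < (hess u y).det := fun y hy => (hpos y hy).det_pos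
  have hdetne : ∀ y ∈ Ω, (hess u y).det ≠ 0 := fun y hy => ne_of_gt (hdetpos y hy)
  have hdunit : ∀ y ∈ Ω, IsUnit (hess u y).det := fun y hy => isUnit_iff_ne_zero.2 (hdetne y hy)
  have hdet_cd : ContDiffOn ℝ (⊤:ℕ∞) (fun y => (hess u y).det) Ω := by
    exact (detCMM n).contDiff.comp_contDiffOn
      (contDiffOn_pi.2 fun i => contDiffOn_pi.2 fun j => hH i j)
  have hadj_cd : ∀ i j : Fin n,
      ContDiffOn ℝ (⊤:ℕ∞) (fun y => (hess u y).adjugate i j) Ω := by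
    intro i j
    have hent : ∀ a b : Fin n, ContDiffOn ℝ (⊤:ℕ∞)
        (fun y => ((hess u y).updateRow j (Pi.single i 1)) a b) Ω := by
      intro a b
      rcases eq_or_ne a j with rfl | hne
      · simp only [Matrix.updateRow_self]
        exact contDiffOn_const
      · simp only [Matrix.updateRow_apply, if_neg hne]
        exact hH a b
    have h2 : ContDiffOn ℝ (⊤:ℕ∞)
        (fun y => (Matrix.of (fun a b => ((hess u y).updateRow j (Pi.single i 1)) a b)).det)
        Ω := by
      exact (detCMM n).contDiff.comp_contDiffOn
        (contDiffOn_pi.2 fun a => contDiffOn_pi.2 fun b => hent a b)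
    exact h2.congr fun y hy => by rw [Matrix.adjugate_apply]; exact rfl
  have hWdef : ∀ y ∈ Ω, ∀ i j : Fin n,
      (hess u y)⁻¹ i j = ((hess u y).det)⁻¹ * (hess u y).adjugate i j := by
    intro y hy i j
    rw [Matrix.inv_def, Ring.inverse_eq_inv']
    simp
  have hW_cd : ∀ i j : Fin n, ContDiffOn ℝ (⊤:ℕ∞) (fun y => (hess u y)⁻¹ i j) Ω := by
    intro i j
    exact ((hdet_cd.inv hdetne).mul (hadj_cd i j)).congr fun y hy => hWdef y hy i j
  have hL_cd : ContDiffOn ℝ (⊤:ℕ∞) (fun z => Real.log (hess u z).det) Ω :=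
    fun y hy => (hdet_cd y hy).log (hdetne y hy)
  have hHd : ∀ (a b : Fin n), ∀ y ∈ Ω, DifferentiableAt ℝ (fun z => hess u z a b) y :=
    fun a b y hy => diffAt_of_cdOn hΩ (hH a b) hy
  have hWd : ∀ (a b : Fin n), ∀ y ∈ Ω, DifferentiableAt ℝ (fun z => (hess u z)⁻¹ a b) y :=
    fun a b y hy => diffAt_of_cdOn hΩ (hW_cd a b) hy
  have hdetd : ∀ y ∈ Ω, DifferentiableAt ℝ (fun z => (hess u z).det) y :=
    fun y hy => diffAt_of_cdOn hΩ hdet_cd hy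
  have hpdLd : ∀ (i : Fin n), ∀ y ∈ Ω,
      DifferentiableAt ℝ (pd i (fun z => Real.log (hess u z).det)) y :=
    fun i y hy => diffAt_of_cdOn hΩ (contDiffOn_pd hΩ hL_cd i) hy
  have hpdWd : ∀ (i j k : Fin n), ∀ y ∈ Ω,
      DifferentiableAt ℝ (pd k (fun z => (hess u z)⁻¹ i j)) y :=
    fun i j k y hy => diffAt_of_cdOn hΩ (contDiffOn_pd hΩ (hW_cd i j) k) hy
  have hWsymm : ∀ y ∈ Ω, ∀ i j : Fin n, (hess u y)⁻¹ i j = (hess u y)⁻¹ j i := by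
    intro y hy i j
    have h := (hpos y hy).1.inv
    have h2 : ((hess u y)⁻¹)ᴴ i j = (hess u y)⁻¹ i j := by rw [h]
    simpa [Matrix.conjTranspose_apply] using h2.symm
  -- derivative of log det
  have hKL : ∀ y ∈ Ω, ∀ k : Fin n, pd k (fun z => Real.log (hess u z).det) y
      = ∑ a, ∑ b, (hess u y)⁻¹ a b * pd k (fun z => hess u z b a) y := by
    intro y hy k
    have h1 : pd k (fun z => Real.log (hess u z).det) y
        = ((hess u y).det)⁻¹ * pd k (fun z => (hess u z).det) y :=
      pd_log_comp k (hdetd y hy) (hdetne y hy)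
    have h2 : pd k (fun z => (hess u z).det) y
        = ∑ j, ∑ i, (hess u y).adjugate i j * pd k (fun z => hess u z j i) y := by
      exact pd_det (M := fun z => fun a b => hess u z a b) (fun i j => hHd i j y hy) k
    rw [h1, h2, Finset.mul_sum]
    conv_rhs => rw [Finset.sum_comm]
    refine Finset.sum_congr rfl fun j _ => ?_
    rw [Finset.mul_sum]
    refine Finset.sum_congr rfl fun i _ => ?_
    rw [hWdef y hy i j]; ring
  -- derivative of the inverse matrix
  have hKW : ∀ y ∈ Ω, ∀ (ii c k : Fin n), pd k (fun z => (hess u z)⁻¹ ii c) y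
      = -∑ a, ∑ b, (hess u y)⁻¹ ii a
          * (pd k (fun z => hess u z a b) y * (hess u y)⁻¹ b c) := by
    intro y hy ii c k
    have hid : ∀ (a c : Fin n), ∀ z ∈ Ω,
        (∑ b, hess u z a b * (hess u z)⁻¹ b c) = (if a = c then (1:ℝ) else 0) := by
      intro a c z hz
      have h1 : hess u z * (hess u z)⁻¹ = 1 := Matrix.mul_nonsing_inv _ (hdunit z hz)
      have h2 : (hess u z * (hess u z)⁻¹) a c = (1 : Matrix (Fin n) (Fin n) ℝ) a c := by
        rw [h1]
      simpa [Matrix.mul_apply, Matrix.one_apply] using h2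
    have hz0 : ∀ a c : Fin n,
        (∑ b, pd k (fun z => hess u z a b) y * (hess u y)⁻¹ b c)
          + (∑ b, hess u y a b * pd k (fun z => (hess u z)⁻¹ b c) y) = 0 := by
      intro a c
      have h0 : pd k (fun z => ∑ b, hess u z a b * (hess u z)⁻¹ b c) y = 0 := by
        rw [pd_congr_open hΩ (hid a c) hy k, pd_const]
      have h1 : pd k (fun z => ∑ b, hess u z a b * (hess u z)⁻¹ b c) y
          = ∑ b, (pd k (fun z => hess u z a b) y * (hess u y)⁻¹ b c
                + hess u y a b * pd k (fun z => (hess u z)⁻¹ b c) y) := by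
        rw [pd_sum (f := fun b z => hess u z a b * (hess u z)⁻¹ b c) k (fun b _ => ((hHd a b y hy).mul (hWd b c y hy)))]
        exact Finset.sum_congr rfl fun b _ => pd_mul k (hHd a b y hy) (hWd b c y hy)
      rw [Finset.sum_add_distrib] at h1
      rw [← h1, h0]
    have hsolve : ∀ a : Fin n,
        ∑ b, hess u y a b * pd k (fun z => (hess u z)⁻¹ b c) y
          = -∑ b, pd k (fun z => hess u z a b) y * (hess u y)⁻¹ b c := by
      intro a; have := hz0 a c; linarith
    have hinv : ∀ b : Fin n, (∑ a, (hess u y)⁻¹ ii a * hess u y a b)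
        = if ii = b then (1:ℝ) else 0 := by
      intro b
      have h1 : (hess u y)⁻¹ * hess u y = 1 := Matrix.nonsing_inv_mul _ (hdunit y hy)
      have h2 : ((hess u y)⁻¹ * hess u y) ii b = (1 : Matrix (Fin n) (Fin n) ℝ) ii b := by
        rw [h1]
      simpa [Matrix.mul_apply, Matrix.one_apply] using h2
    have hcontract : pd k (fun z => (hess u z)⁻¹ ii c) y
        = ∑ a, (hess u y)⁻¹ ii a
            * (∑ b, hess u y a b * pd k (fun z => (hess u z)⁻¹ b c) y) := by
      calc pd k (fun z => (hess u z)⁻¹ ii c) y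
          = ∑ b, (if ii = b then (1:ℝ) else 0) * pd k (fun z => (hess u z)⁻¹ b c) y := by
            simp
        _ = ∑ b, (∑ a, (hess u y)⁻¹ ii a * hess u y a b)
              * pd k (fun z => (hess u z)⁻¹ b c) y := by
            refine Finset.sum_congr rfl fun b _ => ?_; rw [hinv b]
        _ = ∑ a, (hess u y)⁻¹ ii a
              * (∑ b, hess u y a b * pd k (fun z => (hess u z)⁻¹ b c) y) := by
            simp_rw [Finset.sum_mul, Finset.mul_sum, mul_assoc]
            rw [Finset.sum_comm]
    rw [hcontract]
    have hterm : ∀ a : Fin n, (hess u y)⁻¹ ii a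
        * (∑ b, hess u y a b * pd k (fun z => (hess u z)⁻¹ b c) y)
        = -(∑ b, (hess u y)⁻¹ ii a
            * (pd k (fun z => hess u z a b) y * (hess u y)⁻¹ b c)) := by
      intro a
      rw [hsolve a, mul_neg, Finset.mul_sum]
    rw [Finset.sum_congr rfl fun a _ => hterm a, ← Finset.sum_neg_distrib]
  -- the key identity: row sums of derivatives of the inverse
  have hstar : ∀ y ∈ Ω, ∀ i : Fin n,
      ∑ k, pd k (fun z => (hess u z)⁻¹ i k) y
        = -∑ a, (hess u y)⁻¹ i a * pd a (fun z => Real.log (hess u z).det) y := by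
    intro y hy i
    have hswap : ∀ (k a b : Fin n), pd k (fun z => hess u z a b) y
        = pd a (fun z => hess u z k b) y := by
      intro k a b
      have hf : ContDiffAt ℝ (⊤:ℕ∞) (pd b u) y :=
        (contDiffOn_pd hΩ hu' b).contDiffAt (hΩ.mem_nhds hy)
      exact pd_comm hf k a
    calc ∑ k, pd k (fun z => (hess u z)⁻¹ i k) y
        = ∑ k, -∑ a, ∑ b, (hess u y)⁻¹ i a
            * (pd k (fun z => hess u z a b) y * (hess u y)⁻¹ b k) :=
          Finset.sum_congr rfl fun k _ => hKW y hy i k k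
      _ = -∑ k, ∑ a, ∑ b, (hess u y)⁻¹ i a
            * (pd a (fun z => hess u z k b) y * (hess u y)⁻¹ b k) := by
          rw [← Finset.sum_neg_distrib]
          refine Finset.sum_congr rfl fun k _ => ?_
          congr 1
          refine Finset.sum_congr rfl fun a _ => Finset.sum_congr rfl fun b _ => ?_
          rw [hswap k a b]
      _ = -∑ a, (hess u y)⁻¹ i a
            * ∑ k, ∑ b, pd a (fun z => hess u z k b) y * (hess u y)⁻¹ b k := by
          congr 1
          rw [Finset.sum_comm]
          refine Finset.sum_congr rfl fun a _ => ?_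
          rw [Finset.mul_sum]
          refine Finset.sum_congr rfl fun k _ => ?_
          rw [Finset.mul_sum]
      _ = -∑ a, (hess u y)⁻¹ i a * pd a (fun z => Real.log (hess u z).det) y := by
          congr 1
          refine Finset.sum_congr rfl fun a _ => ?_
          congr 1
          rw [hKL y hy a, Finset.sum_comm]
          exact Finset.sum_congr rfl fun k _ => Finset.sum_congr rfl fun b _ => mul_comm _ _
  intro x hx
  have hmem := hΩ.mem_nhds hx
  have hstep : ∀ j : Fin n,
      ∑ i, pd j (fun y => (hess u y)⁻¹ i j * pd i (fun z => Real.log (hess u z).det) y) x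
        = -∑ k, pd j (pd k (fun z => (hess u z)⁻¹ j k)) x := by
    intro j
    have hd1 : ∀ i ∈ (Finset.univ : Finset (Fin n)), DifferentiableAt ℝ
        (fun y => (hess u y)⁻¹ i j * pd i (fun z => Real.log (hess u z).det) y) x :=
      fun i _ => (hWd i j x hx).mul (hpdLd i x hx)
    rw [← pd_sum j hd1]
    have he : ∀ y ∈ Ω,
        (∑ i, (hess u y)⁻¹ i j * pd i (fun z => Real.log (hess u z).det) y)
          = -∑ k, pd k (fun z => (hess u z)⁻¹ j k) y := by
      intro y hy
      rw [show (∑ i, (hess u y)⁻¹ i j * pd i (fun z => Real.log (hess u z).det) y)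
          = ∑ i, (hess u y)⁻¹ j i * pd i (fun z => Real.log (hess u z).det) y from
        Finset.sum_congr rfl fun i _ => by rw [hWsymm y hy i j]]
      rw [← neg_neg (∑ i, (hess u y)⁻¹ j i * pd i (fun z => Real.log (hess u z).det) y),
        ← hstar y hy j]
    rw [pd_congr_open hΩ he hx j]
    rw [pd_neg, pd_sum j (fun k _ => hpdWd j k k x hx)]
  have hS1 : ∑ i, ∑ j, pd j (fun y =>
      (hess u y)⁻¹ i j * pd i (fun z => Real.log (hess u z).det) y) x = A x := by
    rw [Finset.sum_comm]
    rw [Finset.sum_congr rfl fun j (_ : j ∈ Finset.univ) => hstep j]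
    rw [Finset.sum_neg_distrib, habreu x hx, neg_neg]
  refine ⟨hS1, ?_⟩
  have hLct : ContDiffAt ℝ (⊤:ℕ∞) (fun z => Real.log (hess u z).det) x :=
    hL_cd.contDiffAt hmem
  have hexp : ∀ i j : Fin n,
      pd j (fun y => (hess u y)⁻¹ i j * pd i (fun z => Real.log (hess u z).det) y) x
        = pd j (fun z => (hess u z)⁻¹ i j) x * pd i (fun z => Real.log (hess u z).det) x
          + (hess u x)⁻¹ i j * pd j (pd i (fun z => Real.log (hess u z).det)) x :=
    fun i j => pd_mul j (hWd i j x hx) (hpdLd i x hx)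
  calc ∑ i, ∑ j, (hess u x)⁻¹ i j *
        (pd i (pd j (fun z => Real.log (hess u z).det)) x
          - pd i (fun z => Real.log (hess u z).det) x
            * pd j (fun z => Real.log (hess u z).det) x)
      = ∑ i, ((∑ j, (hess u x)⁻¹ i j * pd j (pd i (fun z => Real.log (hess u z).det)) x)
          - ∑ j, (hess u x)⁻¹ i j * (pd i (fun z => Real.log (hess u z).det) x
              * pd j (fun z => Real.log (hess u z).det) x)) := by
        refine Finset.sum_congr rfl fun i _ => ?_
        rw [← Finset.sum_sub_distrib]
        refine Finset.sum_congr rfl fun j _ => ?_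
        rw [pd_comm hLct i j]; ring
    _ = ∑ i, ∑ j, pd j (fun y =>
          (hess u y)⁻¹ i j * pd i (fun z => Real.log (hess u z).det) y) x := by
        refine Finset.sum_congr rfl fun i _ => ?_
        conv_rhs => rw [Finset.sum_congr rfl fun j (_ : j ∈ Finset.univ) => hexp i j]
        rw [Finset.sum_add_distrib]
        have h5 : ∑ j, pd j (fun z => (hess u z)⁻¹ i j) x
              * pd i (fun z => Real.log (hess u z).det) x
            = -∑ j, (hess u x)⁻¹ i j * (pd i (fun z => Real.log (hess u z).det) x
                * pd j (fun z => Real.log (hess u z).det) x) := by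
          rw [← Finset.sum_mul, hstar x hx i, neg_mul, Finset.sum_mul]
          congr 1
          refine Finset.sum_congr rfl fun a _ => ?_
          ring
        rw [h5]; ring
    _ = A x := hS1
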